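/- arXiv:2102.00618 — 3 statements merged into one kernel-verified Lean document; each statement's English description precedes it below -/
import Mathlib

section
/- If X and Y are bounded random variables and there exists a bounded random variable Z independent of both such that X + Z first-order stochastically dominates Y + Z, then K_a(X) ≥ K_a(Y) for every real a ≠ 0, i.e., (1/a)·log E[e^{aX}] ≥ (1/a)·log E[e^{aY}]. -/
/-!
Independence makes cumulant generating functions additive, `K_a(W + Z) = K_a(W) + K_a(Z)`, so the
claim reduces to `K_a(Y + Z) ≤ K_a(X + Z)`, i.e. to monotonicity of `K_a` under first-order
stochastic dominance. By the layer-cake formula `E[exp(aW)]` is an integral of tail probabilities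
of `W`, and dominance orders these tails; for `a < 0` the order of the moment generating functions
flips, and so does the sign of `1 / a`.
-/

open MeasureTheory

namespace ProbabilityTheory

variable {Ω : Type*} [MeasurableSpace Ω] {μ : Measure Ω}

lemma integral_le_integral_of_forall_measure_lt_le {F G : Ω → ℝ} (hF : 0 ≤ᵐ[μ] F)
    (hG : 0 ≤ᵐ[μ] G) (hFi : Integrable F μ) (hGm : AEStronglyMeasurable G μ)
    (htail : ∀ t > 0, μ {ω | t < G ω} ≤ μ {ω | t < F ω}) :
    ∫ ω, G ω ∂μ ≤ ∫ ω, F ω ∂μ := by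
  rw [integral_eq_lintegral_of_nonneg_ae hG hGm,
    integral_eq_lintegral_of_nonneg_ae hF hFi.aestronglyMeasurable]
  refine ENNReal.toReal_mono hFi.lintegral_lt_top.ne ?_
  rw [lintegral_eq_lintegral_meas_lt μ hG hGm.aemeasurable,
    lintegral_eq_lintegral_meas_lt μ hF hFi.aemeasurable]
  exact setLIntegral_mono' measurableSet_Ioi htail

lemma integral_le_integral_of_forall_measure_le_le {F G : Ω → ℝ} (hF : 0 ≤ᵐ[μ] F)
    (hG : 0 ≤ᵐ[μ] G) (hFi : Integrable F μ) (hGm : AEStronglyMeasurable G μ)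
    (htail : ∀ t > 0, μ {ω | t ≤ G ω} ≤ μ {ω | t ≤ F ω}) :
    ∫ ω, G ω ∂μ ≤ ∫ ω, F ω ∂μ := by
  rw [integral_eq_lintegral_of_nonneg_ae hG hGm,
    integral_eq_lintegral_of_nonneg_ae hF hFi.aestronglyMeasurable]
  refine ENNReal.toReal_mono hFi.lintegral_lt_top.ne ?_
  rw [lintegral_eq_lintegral_meas_le μ hG hGm.aemeasurable,
    lintegral_eq_lintegral_meas_le μ hF hFi.aemeasurable]
  exact setLIntegral_mono' measurableSet_Ioi htail

lemma integrable_exp_mul_of_forall_abs_le [IsFiniteMeasure μ] {W : Ω → ℝ} (hW : AEMeasurable W μ)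
    {C : ℝ} (hC : ∀ ω, |W ω| ≤ C) (t : ℝ) :
    Integrable (fun ω ↦ Real.exp (t * W ω)) μ :=
  integrable_exp_mul_of_mem_Icc hW (ae_of_all _ fun ω ↦ abs_le.mp (hC ω))

def StochDominates (μ : Measure Ω) (A B : Ω → ℝ) : Prop :=
  ∀ t : ℝ, μ {ω | A ω ≤ t} ≤ μ {ω | B ω ≤ t}

namespace StochDominates

variable {A B : Ω → ℝ} {t : ℝ}

lemma mgf_le [IsFiniteMeasure μ] (h : StochDominates μ A B) (hA : AEMeasurable A μ)
    (hB : AEMeasurable B μ) (hAi : Integrable (fun ω ↦ Real.exp (t * A ω)) μ) (ht : 0 < t) :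
    mgf B μ t ≤ mgf A μ t := by
  have hset (W : Ω → ℝ) (s : ℝ) (hs : 0 < s) :
      {ω | s < Real.exp (t * W ω)} = {ω | W ω ≤ Real.log s / t}ᶜ := by
    ext ω
    simp only [Set.mem_ofPred_eq, Set.mem_compl_iff, not_le]
    rw [← Real.exp_log hs, Real.exp_lt_exp, Real.exp_log hs, div_lt_iff₀' ht]
  refine integral_le_integral_of_forall_measure_lt_le (ae_of_all _ fun _ ↦ (Real.exp_pos _).le)
    (ae_of_all _ fun _ ↦ (Real.exp_pos _).le) hAi (aemeasurable_exp_mul t hB) fun s hs ↦ ?_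
  have hnull (W : Ω → ℝ) (hW : AEMeasurable W μ) :
      NullMeasurableSet {ω | W ω ≤ Real.log s / t} μ := hW.nullMeasurable measurableSet_Iic
  rw [hset A s hs, hset B s hs, measure_compl₀ (hnull A hA) (measure_ne_top μ _),
    measure_compl₀ (hnull B hB) (measure_ne_top μ _)]
  exact tsub_le_tsub_left (h _) _

lemma mgf_le_of_neg (h : StochDominates μ A B) (hA : AEMeasurable A μ)
    (hBi : Integrable (fun ω ↦ Real.exp (t * B ω)) μ) (ht : t < 0) :
    mgf A μ t ≤ mgf B μ t := by
  have hset (W : Ω → ℝ) (s : ℝ) (hs : 0 < s) :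
      {ω | s ≤ Real.exp (t * W ω)} = {ω | W ω ≤ Real.log s / t} := by
    ext ω
    simp only [Set.mem_ofPred_eq]
    rw [← Real.exp_log hs, Real.exp_le_exp, Real.exp_log hs, le_div_iff_of_neg ht, mul_comm]
  refine integral_le_integral_of_forall_measure_le_le (ae_of_all _ fun _ ↦ (Real.exp_pos _).le)
    (ae_of_all _ fun _ ↦ (Real.exp_pos _).le) hBi (aemeasurable_exp_mul t hA) fun s hs ↦ ?_
  rw [hset A s hs, hset B s hs]
  exact h _

lemma one_div_mul_cgf_le [IsProbabilityMeasure μ] (h : StochDominates μ A B)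
    (hA : AEMeasurable A μ) (hB : AEMeasurable B μ)
    (hAi : Integrable (fun ω ↦ Real.exp (t * A ω)) μ)
    (hBi : Integrable (fun ω ↦ Real.exp (t * B ω)) μ) (ht : t ≠ 0) :
    1 / t * cgf B μ t ≤ 1 / t * cgf A μ t := by
  rcases ht.lt_or_gt with ht | ht
  · refine mul_le_mul_of_nonpos_left ?_ (one_div_nonpos.mpr ht.le)
    exact Real.log_le_log (mgf_pos hAi) (h.mgf_le_of_neg hA hBi ht)
  · refine mul_le_mul_of_nonneg_left ?_ (one_div_nonneg.mpr ht.le)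
    exact Real.log_le_log (mgf_pos hBi) (h.mgf_le hA hB hAi ht)

end StochDominates

end ProbabilityTheory

open ProbabilityTheory in
/-- If `X + Z ≥₁ Y + Z` for some bounded `Z` independent of `X` and `Y`, then
`K_a(X) ≥ K_a(Y)` for every `a ≠ 0`. -/
theorem K_monotone_of_catalytic_dominance
    {Ω : Type*} [MeasurableSpace Ω] (μ : Measure Ω) [IsProbabilityMeasure μ]
    (X Y Z : Ω → ℝ) (hX : Measurable X) (hY : Measurable Y) (hZ : Measurable Z)
    (hXb : ∃ C, ∀ ω, |X ω| ≤ C) (hYb : ∃ C, ∀ ω, |Y ω| ≤ C)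
    (hZb : ∃ C, ∀ ω, |Z ω| ≤ C)
    (hindXZ : ProbabilityTheory.IndepFun X Z μ)
    (hindYZ : ProbabilityTheory.IndepFun Y Z μ)
    (hdom : ∀ t : ℝ, μ {ω | X ω + Z ω ≤ t} ≤ μ {ω | Y ω + Z ω ≤ t}) :
    ∀ a : ℝ, a ≠ 0 →
      (1 / a) * Real.log (∫ ω, Real.exp (a * Y ω) ∂μ) ≤
        (1 / a) * Real.log (∫ ω, Real.exp (a * X ω) ∂μ) := by
  intro a ha
  obtain ⟨CX, hCX⟩ := hXb
  obtain ⟨CY, hCY⟩ := hYb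
  obtain ⟨CZ, hCZ⟩ := hZb
  have hXi := integrable_exp_mul_of_forall_abs_le (hX.aemeasurable (μ := μ)) hCX a
  have hYi := integrable_exp_mul_of_forall_abs_le (hY.aemeasurable (μ := μ)) hCY a
  have hZi := integrable_exp_mul_of_forall_abs_le (hZ.aemeasurable (μ := μ)) hCZ a
  have hsum : 1 / a * cgf (Y + Z) μ a ≤ 1 / a * cgf (X + Z) μ a :=
    StochDominates.one_div_mul_cgf_le hdom (hX.add hZ).aemeasurable (hY.add hZ).aemeasurable
      (hindXZ.integrable_exp_mul_add hXi hZi) (hindYZ.integrable_exp_mul_add hYi hZi) ha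
  rw [hindXZ.cgf_add hXi hZi, hindYZ.cgf_add hYi hZi, mul_add, mul_add] at hsum
  exact le_of_add_le_add_right hsum
end

section
/- Fix b > 0 and for each positive integer n let X_{n,b} be the random variable with P(X_{n,b} = n) = e^{-bn} and P(X_{n,b} = 0) = 1 - e^{-bn}. Then for every real a ≠ 0, lim_{n→∞} (1/n)·K_a(X_{n,b}) equals 0 if a < b and equals (a−b)/a if a ≥ b; and lim_{n→∞} (1/n)·E[X_{n,b}] = 0. -/
open Filter Topology Real

/-! Write the argument of the logarithm as `x + exp (c n)` with `x = 1 - e^{-bn} ∈ [0, 1]` and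
`c = a - b`. If `c < 0` the argument tends to `1`, so its logarithm is `o(n)`. If `c ≥ 0` then
`exp (c n) ≤ x + exp (c n) ≤ 2 exp (c n)`, so the logarithm is `c n + O(1)`. Either way
`log (x + exp (c n)) / n → max c 0`, and `(1 / a) · max (a - b) 0` is the claimed limit. -/

lemma tendsto_exp_mul_natCast_nhds_zero {c : ℝ} (hc : c < 0) :
    Tendsto (fun n : ℕ => exp (c * n)) atTop (𝓝 0) :=
  tendsto_exp_atBot.comp (tendsto_natCast_atTop_atTop.const_mul_atTop_of_neg hc)

lemma tendsto_div_natCast_of_abs_sub_le {f : ℕ → ℝ} {c C : ℝ} (h : ∀ n : ℕ, |f n - c * n| ≤ C) :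
    Tendsto (fun n : ℕ => f n / n) atTop (𝓝 c) := by
  rw [tendsto_iff_norm_sub_tendsto_zero]
  refine squeeze_zero' (Eventually.of_forall fun _ => norm_nonneg _) ?_
    (tendsto_const_div_atTop_nhds_zero_nat C)
  filter_upwards [eventually_ne_atTop 0] with n hn
  have hn' : (0 : ℝ) < n := Nat.cast_pos.2 (Nat.pos_of_ne_zero hn)
  rw [Real.norm_eq_abs, show f n / n - c = (f n - c * n) / n by field_simp, abs_div,
    abs_of_pos hn']
  exact div_le_div_of_nonneg_right (h n) hn'.le

lemma abs_log_add_exp_sub_le {x t : ℝ} (hx : x ∈ Set.Icc (0 : ℝ) 1) (ht : 0 ≤ t) :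
    |log (x + exp t) - t| ≤ log 2 := by
  have hpos : 0 < x + exp t := by linarith [hx.1, exp_pos t]
  have hlower : t ≤ log (x + exp t) := (le_log_iff_exp_le hpos).2 (by linarith [hx.1])
  have hupper : log (x + exp t) ≤ log 2 + t := by
    rw [log_le_iff_le_exp hpos, exp_add, exp_log two_pos]
    linarith [hx.2, one_le_exp ht]
  rw [abs_of_nonneg (by linarith)]
  linarith

lemma tendsto_log_add_exp_mul_natCast_div {x : ℕ → ℝ} (c : ℝ)
    (hx : ∀ n, x n ∈ Set.Icc (0 : ℝ) 1) (hx_lim : Tendsto x atTop (𝓝 1)) :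
    Tendsto (fun n : ℕ => log (x n + exp (c * n)) / n) atTop (𝓝 (max c 0)) := by
  rcases lt_or_ge c 0 with hc | hc
  · have hlog : Tendsto (fun n : ℕ => log (x n + exp (c * n))) atTop (𝓝 0) := by
      simpa using (hx_lim.add (tendsto_exp_mul_natCast_nhds_zero hc)).log (by norm_num)
    rw [max_eq_right hc.le]
    exact hlog.div_atTop tendsto_natCast_atTop_atTop
  · rw [max_eq_left hc]
    exact tendsto_div_natCast_of_abs_sub_le fun n =>
      abs_log_add_exp_sub_le (hx n) (mul_nonneg hc n.cast_nonneg)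

theorem limit_K_two_point_general (b : ℝ) (hb : 0 < b) (a : ℝ) :
    Tendsto (fun n : ℕ =>
        (1 / (n : ℝ)) *
          ((1 / a) * Real.log ((1 - Real.exp (-b * n)) + Real.exp ((a - b) * n))))
      atTop (nhds (if a < b then 0 else (a - b) / a)) ∧
    Tendsto (fun n : ℕ => (1 / (n : ℝ)) * ((n : ℝ) * Real.exp (-b * n)))
      atTop (nhds 0) := by
  have hexp : Tendsto (fun n : ℕ => exp (-b * n)) atTop (𝓝 0) :=
    tendsto_exp_mul_natCast_nhds_zero (neg_lt_zero.2 hb)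
  refine ⟨?_, ?_⟩
  · have hx : ∀ n : ℕ, 1 - exp (-b * n) ∈ Set.Icc (0 : ℝ) 1 := fun n =>
      ⟨sub_nonneg.2 (exp_le_one_iff.2 (by nlinarith [n.cast_nonneg (α := ℝ)])),
        sub_le_self _ (exp_nonneg _)⟩
    have hlog := (tendsto_log_add_exp_mul_natCast_div (a - b) hx
      (by simpa using tendsto_const_nhds.sub hexp)).const_mul (1 / a)
    have hlim : 1 / a * max (a - b) 0 = if a < b then 0 else (a - b) / a := by
      split_ifs with hab
      · rw [max_eq_right (by linarith), mul_zero]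
      · rw [max_eq_left (by linarith), one_div_mul_eq_div]
    rw [← hlim]
    exact hlog.congr fun n => by ring
  · refine hexp.congr' ?_
    filter_upwards [eventually_ne_atTop 0] with n hn
    field_simp

/-- For the two-point random variable `X_{n,b}` with `P(X_{n,b} = n) = e^{-bn}` and
`P(X_{n,b} = 0) = 1 - e^{-bn}` (so `K_a(X_{n,b}) = (1/a)·log((1 - e^{-bn}) + e^{(a-b)n})`
and `E[X_{n,b}] = n·e^{-bn}`): as `n → ∞`, `(1/n)·K_a(X_{n,b})` converges to `0` if
`a < b` and to `(a - b)/a` if `a ≥ b`, while `(1/n)·E[X_{n,b}]` converges to `0`. -/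
theorem limit_K_two_point (b : ℝ) (hb : 0 < b) (a : ℝ) (ha : a ≠ 0) :
    Tendsto (fun n : ℕ =>
        (1 / (n : ℝ)) *
          ((1 / a) * Real.log ((1 - Real.exp (-b * n)) + Real.exp ((a - b) * n))))
      atTop (nhds (if a < b then 0 else (a - b) / a)) ∧
    Tendsto (fun n : ℕ => (1 / (n : ℝ)) * ((n : ℝ) * Real.exp (-b * n)))
      atTop (nhds 0) :=
  limit_K_two_point_general b hb a
end

section
/- Let Φ be a monotone additive statistic on non-negative bounded random variables, i.e. Φ is additive for independent sums, monotone in first-order stochastic dominance, and satisfies Φ(c) = c for non-negative constants c. Then Ψ(X) := ess inf X + Φ(X − ess inf X) defines a monotone additive statistic on all bounded random variables extending Φ. -/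
open MeasureTheory Filter ProbabilityTheory

set_option linter.unusedSectionVars false
set_option linter.unusedVariables false

open MeasureTheory Filter ProbabilityTheory

section Aux
variable {Ω : Type*} [MeasurableSpace Ω] {μ : Measure Ω} [IsProbabilityMeasure μ]

lemma aux_bddBelow {X : Ω → ℝ} {C : ℝ} (hC : ∀ ω, |X ω| ≤ C) :
    IsBoundedUnder (· ≥ ·) (ae μ) X :=
  isBoundedUnder_of ⟨-C, fun ω => neg_le_of_abs_le (hC ω)⟩

lemma aux_bddAbove {X : Ω → ℝ} {C : ℝ} (hC : ∀ ω, |X ω| ≤ C) :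
    IsBoundedUnder (· ≤ ·) (ae μ) X :=
  isBoundedUnder_of ⟨C, fun ω => le_of_abs_le (hC ω)⟩

lemma aux_cobdd {X : Ω → ℝ} {C : ℝ} (hC : ∀ ω, |X ω| ≤ C) :
    IsCoboundedUnder (· ≥ ·) (ae μ) X := by
  haveI : (ae μ).NeBot := IsProbabilityMeasure.ae_neBot
  exact (aux_bddAbove hC).isCoboundedUnder_ge

lemma aux_ae_le {X : Ω → ℝ} {C : ℝ} (hC : ∀ ω, |X ω| ≤ C) :
    ∀ᵐ ω ∂μ, essInf X μ ≤ X ω :=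
  ae_essInf_le (aux_bddBelow hC)

lemma aux_le_essInf {X : Ω → ℝ} {C c : ℝ} (hC : ∀ ω, |X ω| ≤ C)
    (h : ∀ᵐ ω ∂μ, c ≤ X ω) : c ≤ essInf X μ :=
  le_liminf_of_le (aux_cobdd hC) h

lemma aux_essInf_lt {X : Ω → ℝ} {C a : ℝ} (hC : ∀ ω, |X ω| ≤ C)
    (h : μ {ω | X ω < a} ≠ 0) : essInf X μ < a := by
  by_contra h'
  push_neg at h'
  have hae : ∀ᵐ ω ∂μ, a ≤ X ω := (aux_ae_le hC).mono fun ω hω => le_trans h' hω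
  rw [ae_iff] at hae
  simp only [not_le] at hae
  exact h hae

lemma aux_essInf_sub {X : Ω → ℝ} {C : ℝ} (hC : ∀ ω, |X ω| ≤ C) (c : ℝ) :
    essInf (fun ω => X ω - c) μ = essInf X μ - c := by
  haveI : (ae μ).NeBot := IsProbabilityMeasure.ae_neBot
  have := liminf_add_const (ae μ) X (-c) (aux_cobdd hC) (aux_bddBelow hC)
  simpa [essInf, sub_eq_add_neg] using this

lemma aux_indepFun_const (X : Ω → ℝ) (c : ℝ) : IndepFun X (fun _ => c) μ := by
  rw [indepFun_iff_measure_inter_preimage_eq_mul]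
  intro s t _ _
  by_cases hc : c ∈ t
  · have ht : (fun _ : Ω => c) ⁻¹' t = Set.univ := by ext ω; simp [hc]
    simp [ht]
  · have ht : (fun _ : Ω => c) ⁻¹' t = ∅ := by ext ω; simp [hc]
    simp [ht]

lemma aux_pos_meas {X : Ω → ℝ} {C : ℝ} (hC : ∀ ω, |X ω| ≤ C) {ε : ℝ} (hε : 0 < ε) :
    μ {ω | X ω < essInf X μ + ε} ≠ 0 := by
  intro h0
  have hae : ∀ᵐ ω ∂μ, essInf X μ + ε ≤ X ω := by
    rw [ae_iff]; simpa only [not_le] using h0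
  have := aux_le_essInf hC hae
  linarith

lemma aux_essInf_add {X Y : Ω → ℝ} {C D : ℝ} (hX : Measurable X) (hY : Measurable Y)
    (hC : ∀ ω, |X ω| ≤ C) (hD : ∀ ω, |Y ω| ≤ D) (hXY : IndepFun X Y μ) :
    essInf (fun ω => X ω + Y ω) μ = essInf X μ + essInf Y μ := by
  have hS : ∀ ω, |X ω + Y ω| ≤ C + D := fun ω =>
    (abs_add_le _ _).trans (add_le_add (hC ω) (hD ω))
  refine le_antisymm ?_ ?_
  · refine le_of_forall_pos_le_add fun ε hε => ?_
    have hA := aux_pos_meas (μ := μ) hC (half_pos hε)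
    have hB := aux_pos_meas (μ := μ) hD (half_pos hε)
    have hAB : μ ({ω | X ω < essInf X μ + ε / 2} ∩ {ω | Y ω < essInf Y μ + ε / 2}) ≠ 0 := by
      have : {ω | X ω < essInf X μ + ε / 2} = X ⁻¹' (Set.Iio (essInf X μ + ε / 2)) := rfl
      have hB' : {ω | Y ω < essInf Y μ + ε / 2} = Y ⁻¹' (Set.Iio (essInf Y μ + ε / 2)) := rfl
      rw [this, hB', hXY.measure_inter_preimage_eq_mul _ _ measurableSet_Iio measurableSet_Iio]
      exact mul_ne_zero hA hB
    have hsub : ({ω | X ω < essInf X μ + ε / 2} ∩ {ω | Y ω < essInf Y μ + ε / 2}) ⊆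
        {ω | X ω + Y ω < essInf X μ + essInf Y μ + ε} := by
      rintro ω ⟨h1, h2⟩
      simp only [Set.mem_setOf_eq] at h1 h2 ⊢
      linarith
    have hne : μ {ω | X ω + Y ω < essInf X μ + essInf Y μ + ε} ≠ 0 := by
      intro h0
      exact hAB (le_antisymm (h0 ▸ measure_mono hsub) zero_le)
    exact (aux_essInf_lt hS hne).le
  · refine aux_le_essInf hS ?_
    filter_upwards [aux_ae_le (μ := μ) hC, aux_ae_le (μ := μ) hD] with ω h1 h2
    exact add_le_add h1 h2

lemma aux_essInf_fosd {X Y : Ω → ℝ} {C D : ℝ}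
    (hC : ∀ ω, |X ω| ≤ C) (hD : ∀ ω, |Y ω| ≤ D)
    (h : ∀ t : ℝ, μ {ω | X ω ≤ t} ≤ μ {ω | Y ω ≤ t}) :
    essInf Y μ ≤ essInf X μ := by
  by_contra hlt
  push_neg at hlt
  obtain ⟨t, ht1, ht2⟩ := exists_between hlt
  have hYae : ∀ᵐ ω ∂μ, t < Y ω := ae_lt_of_lt_essInf ht2 (aux_bddBelow hD)
  have hY0 : μ {ω | Y ω ≤ t} = 0 := by
    rw [ae_iff] at hYae; simpa only [not_lt] using hYae
  have hX0 : μ {ω | X ω ≤ t} = 0 := le_antisymm (hY0 ▸ h t) zero_le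
  have hXae : ∀ᵐ ω ∂μ, t ≤ X ω := by
    rw [ae_iff]; simpa only [not_le] using
      measure_mono_null (s := {ω | X ω < t}) (fun ω (hω : X ω < t) => hω.le) hX0
  have := aux_le_essInf hC hXae
  linarith

end Aux


/-- If `Φ` is a monotone additive statistic on bounded non-negative random variables,
then `Ψ(X) := ess inf X + Φ(X − ess inf X)` defines a monotone additive statistic on
all bounded random variables extending `Φ`. -/
theorem extend_monotone_additive_statistic_from_nonneg
    {Ω : Type*} [MeasurableSpace Ω] (μ : Measure Ω) [IsProbabilityMeasure μ]
    (Φ : (Ω → ℝ) → ℝ)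
    -- Φ depends only on the distribution (on non-negative bounded random variables)
    (hdist : ∀ X Y : Ω → ℝ, Measurable X → Measurable Y →
      (∃ C, ∀ ω, |X ω| ≤ C) → (∃ C, ∀ ω, |Y ω| ≤ C) →
      (∀ᵐ ω ∂μ, 0 ≤ X ω) → (∀ᵐ ω ∂μ, 0 ≤ Y ω) →
      μ.map X = μ.map Y → Φ X = Φ Y)
    -- Φ assigns c to the non-negative constant c
    (hconst : ∀ c : ℝ, 0 ≤ c → Φ (fun _ => c) = c)
    -- Φ is additive for independent sums
    (hadd : ∀ X Y : Ω → ℝ, Measurable X → Measurable Y →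
      (∃ C, ∀ ω, |X ω| ≤ C) → (∃ C, ∀ ω, |Y ω| ≤ C) →
      (∀ᵐ ω ∂μ, 0 ≤ X ω) → (∀ᵐ ω ∂μ, 0 ≤ Y ω) →
      ProbabilityTheory.IndepFun X Y μ → Φ (fun ω => X ω + Y ω) = Φ X + Φ Y)
    -- Φ is monotone with respect to first-order stochastic dominance
    (hmono : ∀ X Y : Ω → ℝ, Measurable X → Measurable Y →
      (∃ C, ∀ ω, |X ω| ≤ C) → (∃ C, ∀ ω, |Y ω| ≤ C) →
      (∀ᵐ ω ∂μ, 0 ≤ X ω) → (∀ᵐ ω ∂μ, 0 ≤ Y ω) →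
      (∀ t : ℝ, μ {ω | X ω ≤ t} ≤ μ {ω | Y ω ≤ t}) → Φ Y ≤ Φ X)
    (Ψ : (Ω → ℝ) → ℝ)
    (hΨ : ∀ X : Ω → ℝ, Ψ X = essInf X μ + Φ (fun ω => X ω - essInf X μ)) :
    -- Ψ extends Φ on non-negative bounded random variables
    (∀ X : Ω → ℝ, Measurable X → (∃ C, ∀ ω, |X ω| ≤ C) →
      (∀ᵐ ω ∂μ, 0 ≤ X ω) → Ψ X = Φ X) ∧
    -- Ψ assigns c to every constant c
    (∀ c : ℝ, Ψ (fun _ => c) = c) ∧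
    -- Ψ is additive for independent sums of bounded random variables
    (∀ X Y : Ω → ℝ, Measurable X → Measurable Y →
      (∃ C, ∀ ω, |X ω| ≤ C) → (∃ C, ∀ ω, |Y ω| ≤ C) →
      ProbabilityTheory.IndepFun X Y μ → Ψ (fun ω => X ω + Y ω) = Ψ X + Ψ Y) ∧
    -- Ψ is monotone with respect to first-order stochastic dominance
    (∀ X Y : Ω → ℝ, Measurable X → Measurable Y →
      (∃ C, ∀ ω, |X ω| ≤ C) → (∃ C, ∀ ω, |Y ω| ≤ C) →
      (∀ t : ℝ, μ {ω | X ω ≤ t} ≤ μ {ω | Y ω ≤ t}) → Ψ Y ≤ Ψ X) := by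

  haveI : (ae μ).NeBot := IsProbabilityMeasure.ae_neBot
  -- Part 1: extension
  have ext : ∀ X : Ω → ℝ, Measurable X → (∃ C, ∀ ω, |X ω| ≤ C) →
      (∀ᵐ ω ∂μ, 0 ≤ X ω) → Ψ X = Φ X := by
    rintro X hXm ⟨C, hC⟩ hX0
    set m := essInf X μ with hm
    have hm0 : 0 ≤ m := aux_le_essInf hC hX0
    have hX'm : Measurable fun ω => X ω - m := hXm.sub measurable_const
    have hX'b : ∃ C', ∀ ω, |X ω - m| ≤ C' :=
      ⟨C + |m|, fun ω => (abs_sub _ _).trans (add_le_add (hC ω) le_rfl)⟩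
    have hX'0 : ∀ᵐ ω ∂μ, 0 ≤ X ω - m :=
      (aux_ae_le hC).mono fun ω h => sub_nonneg.2 h
    have key := hadd (fun ω => X ω - m) (fun _ => m) hX'm measurable_const hX'b
      ⟨|m|, fun _ => le_rfl⟩ hX'0 (Filter.Eventually.of_forall fun _ => hm0)
      (aux_indepFun_const _ m)
    simp only [sub_add_cancel] at key
    rw [hΨ, key, hconst m hm0]
    ring
  refine ⟨ext, ?_, ?_, ?_⟩
  -- Part 2: constants
  · intro c
    rw [hΨ, essInf_const c (IsProbabilityMeasure.ne_zero μ)]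
    simpa using hconst 0 le_rfl
  -- Part 3: additivity
  · rintro X Y hXm hYm ⟨C, hC⟩ ⟨D, hD⟩ hXY
    set mX := essInf X μ
    set mY := essInf Y μ
    have hsum : essInf (fun ω => X ω + Y ω) μ = mX + mY :=
      aux_essInf_add hXm hYm hC hD hXY
    have hX'm : Measurable fun ω => X ω - mX := hXm.sub measurable_const
    have hY'm : Measurable fun ω => Y ω - mY := hYm.sub measurable_const
    have hX'b : ∃ C', ∀ ω, |X ω - mX| ≤ C' :=
      ⟨C + |mX|, fun ω => (abs_sub _ _).trans (add_le_add (hC ω) le_rfl)⟩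
    have hY'b : ∃ C', ∀ ω, |Y ω - mY| ≤ C' :=
      ⟨D + |mY|, fun ω => (abs_sub _ _).trans (add_le_add (hD ω) le_rfl)⟩
    have hX'0 : ∀ᵐ ω ∂μ, 0 ≤ X ω - mX :=
      (aux_ae_le hC).mono fun ω h => sub_nonneg.2 h
    have hY'0 : ∀ᵐ ω ∂μ, 0 ≤ Y ω - mY :=
      (aux_ae_le hD).mono fun ω h => sub_nonneg.2 h
    have hindep' : ProbabilityTheory.IndepFun (fun ω => X ω - mX) (fun ω => Y ω - mY) μ :=
      hXY.comp (measurable_id.sub measurable_const) (measurable_id.sub measurable_const)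
    have key := hadd (fun ω => X ω - mX) (fun ω => Y ω - mY) hX'm hY'm hX'b hY'b
      hX'0 hY'0 hindep'
    have heq : (fun ω => X ω + Y ω - (mX + mY)) =
        fun ω => (X ω - mX) + (Y ω - mY) := by
      funext ω; ring
    rw [hΨ, hΨ, hΨ, hsum, heq, key]
    ring
  -- Part 4: monotonicity
  · rintro X Y hXm hYm ⟨C, hC⟩ ⟨D, hD⟩ hfosd
    set m := essInf Y μ with hmdef
    set M := essInf X μ with hMdef
    have hmM : m ≤ M := aux_essInf_fosd hC hD hfosd
    have hXmm : Measurable fun ω => X ω - m := hXm.sub measurable_const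
    have hYmm : Measurable fun ω => Y ω - m := hYm.sub measurable_const
    have hXmb : ∃ C', ∀ ω, |X ω - m| ≤ C' :=
      ⟨C + |m|, fun ω => (abs_sub _ _).trans (add_le_add (hC ω) le_rfl)⟩
    have hYmb : ∃ C', ∀ ω, |Y ω - m| ≤ C' :=
      ⟨D + |m|, fun ω => (abs_sub _ _).trans (add_le_add (hD ω) le_rfl)⟩
    have hXm0 : ∀ᵐ ω ∂μ, 0 ≤ X ω - m :=
      (aux_ae_le hC).mono fun ω h => by simp only [sub_nonneg]; linarith
    have hYm0 : ∀ᵐ ω ∂μ, 0 ≤ Y ω - m :=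
      (aux_ae_le hD).mono fun ω h => sub_nonneg.2 h
    -- shifted FOSD
    have hfosd' : ∀ t : ℝ, μ {ω | X ω - m ≤ t} ≤ μ {ω | Y ω - m ≤ t} := by
      intro t
      have h1 : {ω | X ω - m ≤ t} = {ω | X ω ≤ t + m} := by
        ext ω; simp [sub_le_iff_le_add]
      have h2 : {ω | Y ω - m ≤ t} = {ω | Y ω ≤ t + m} := by
        ext ω; simp [sub_le_iff_le_add]
      rw [h1, h2]; exact hfosd (t + m)
    have hmono' : Φ (fun ω => Y ω - m) ≤ Φ (fun ω => X ω - m) :=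
      hmono _ _ hXmm hYmm hXmb hYmb hXm0 hYm0 hfosd'
    -- Φ(X - m) = Φ(X - M) + (M - m)
    have hXMm : Measurable fun ω => X ω - M := hXm.sub measurable_const
    have hXMb : ∃ C', ∀ ω, |X ω - M| ≤ C' :=
      ⟨C + |M|, fun ω => (abs_sub _ _).trans (add_le_add (hC ω) le_rfl)⟩
    have hXM0 : ∀ᵐ ω ∂μ, 0 ≤ X ω - M :=
      (aux_ae_le hC).mono fun ω h => sub_nonneg.2 h
    have hsplit := hadd (fun ω => X ω - M) (fun _ => M - m) hXMm measurable_const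
      hXMb ⟨|M - m|, fun _ => le_rfl⟩ hXM0
      (Filter.Eventually.of_forall fun _ => sub_nonneg.2 hmM)
      (aux_indepFun_const _ (M - m))
    have heq : (fun ω => (X ω - M) + (M - m)) = fun ω => X ω - m := by
      funext ω; ring
    rw [heq] at hsplit
    rw [hΨ X, hΨ Y, ← hmdef, ← hMdef, hconst (M - m) (sub_nonneg.2 hmM)] at *
    calc m + Φ (fun ω => Y ω - m) ≤ m + Φ (fun ω => X ω - m) := by linarith
      _ = M + Φ (fun ω => X ω - M) := by rw [hsplit]; ring
end
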